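/- arXiv:0812.1462 — 10 statements merged into one kernel-verified Lean document; each statement's English description precedes it below -/
import Mathlib

section
/- For any propositional formula F and any HT-interpretation (X,Y) (i.e., X ⊆ Y), the HT-interpretation (X,Y) satisfies F in the logic of here-and-there if and only if X classically satisfies the reduct F^Y. -/
inductive PForm (α : Type) : Type where
  | bot : PForm α
  | atom : α → PForm α
  | and : PForm α → PForm α → PForm α
  | or : PForm α → PForm α → PForm α
  | imp : PForm α → PForm α → PForm α

namespace PForm

variable {α : Type}

def top : PForm α := imp bot bot

def neg (F : PForm α) : PForm α := imp F bot

def sat (X : Set α) : PForm α → Prop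
  | bot => False
  | atom a => a ∈ X
  | and F G => sat X F ∧ sat X G
  | or F G => sat X F ∨ sat X G
  | imp F G => sat X F → sat X G

open Classical in
noncomputable def reduct (X : Set α) : PForm α → PForm α
  | bot => bot
  | atom a => if a ∈ X then atom a else bot
  | and F G => if sat X (and F G) then and (reduct X F) (reduct X G) else bot
  | or F G => if sat X (or F G) then or (reduct X F) (reduct X G) else bot
  | imp F G => if sat X (imp F G) then imp (reduct X F) (reduct X G) else bot

def headAtoms : PForm α → Set α
  | bot => ∅
  | atom a => {a}
  | and F G => headAtoms F ∪ headAtoms G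
  | or F G => headAtoms F ∪ headAtoms G
  | imp _ G => headAtoms G

def atomsOf : PForm α → Set α
  | bot => ∅
  | atom a => {a}
  | and F G => atomsOf F ∪ atomsOf G
  | or F G => atomsOf F ∪ atomsOf G
  | imp F G => atomsOf F ∪ atomsOf G

def htSat (X Y : Set α) : PForm α → Prop
  | bot => False
  | atom a => a ∈ X
  | and F G => htSat X Y F ∧ htSat X Y G
  | or F G => htSat X Y F ∨ htSat X Y G
  | imp F G => (htSat X Y F → htSat X Y G) ∧ sat Y (imp F G)

end PForm

variable {α : Type}

/-- Satisfaction of a theory (set of formulas). -/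
def satTh (X : Set α) (Γ : Set (PForm α)) : Prop := ∀ F ∈ Γ, PForm.sat X F

/-- The reduct of a theory relative to X. -/
noncomputable def reductTh (X : Set α) (Γ : Set (PForm α)) : Set (PForm α) :=
  PForm.reduct X '' Γ

/-- X is a stable model of Γ iff X is a minimal set satisfying Γ^X. -/
def StableModel (Γ : Set (PForm α)) (X : Set α) : Prop :=
  satTh X (reductTh X Γ) ∧ ∀ Y : Set α, Y ⊂ X → ¬ satTh Y (reductTh X Γ)

def htSatTh (X Y : Set α) (Γ : Set (PForm α)) : Prop := ∀ F ∈ Γ, PForm.htSat X Y F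

def theoryHeadAtoms (Γ : Set (PForm α)) : Set α := ⋃ F ∈ Γ, PForm.headAtoms F

/-! When `Y ⊭ F` both sides fail: the left one because here-and-there satisfaction persists from
`X` to `Y`, the right one because the reduct is then `⊥`. When `Y ⊨ F` the reduct commutes with
the outer connective and induction applies; for `→` the extra classical condition on `Y` is exactly
that case hypothesis. -/

namespace PForm

variable {X Y : Set α} {F G : PForm α}

theorem sat_of_htSat (hXY : X ⊆ Y) : htSat X Y F → sat Y F := by
  induction F with
  | bot => exact id
  | atom a => exact fun h => hXY h
  | and F G ihF ihG => exact And.imp ihF ihG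
  | or F G ihF ihG => exact Or.imp ihF ihG
  | imp F G _ _ => exact And.right

theorem reduct_eq_bot_of_not_sat (h : ¬ sat Y F) : reduct Y F = bot := by
  cases F with
  | bot => rfl
  | atom | and | or | imp => exact if_neg h

theorem htSat_iff_sat_reduct_of_not_sat (hXY : X ⊆ Y) (h : ¬ sat Y F) :
    htSat X Y F ↔ sat X (reduct Y F) := by
  rw [reduct_eq_bot_of_not_sat h]
  exact iff_of_false (mt (sat_of_htSat hXY) h) id

theorem reduct_atom {a : α} (h : a ∈ Y) : reduct Y (atom a) = atom a := by
  simp [reduct, h]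

theorem reduct_and (h : sat Y (and F G)) : reduct Y (and F G) = and (reduct Y F) (reduct Y G) := by
  rw [reduct, if_pos h]

theorem reduct_or (h : sat Y (or F G)) : reduct Y (or F G) = or (reduct Y F) (reduct Y G) := by
  rw [reduct, if_pos h]

theorem reduct_imp (h : sat Y (imp F G)) : reduct Y (imp F G) = imp (reduct Y F) (reduct Y G) := by
  rw [reduct, if_pos h]

end PForm

/-- (X,Y) ⊨ F in here-and-there iff X ⊨ F^Y. -/
theorem stmt2 (F : PForm α) (X Y : Set α) (hXY : X ⊆ Y) :
    PForm.htSat X Y F ↔ PForm.sat X (PForm.reduct Y F) := by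
  induction F with
  | bot => exact Iff.rfl
  | atom a =>
    by_cases h : a ∈ Y
    · rw [PForm.reduct_atom h]
      exact Iff.rfl
    · exact PForm.htSat_iff_sat_reduct_of_not_sat hXY h
  | and F G ihF ihG =>
    by_cases h : PForm.sat Y (.and F G)
    · rw [PForm.reduct_and h]
      exact and_congr ihF ihG
    · exact PForm.htSat_iff_sat_reduct_of_not_sat hXY h
  | or F G ihF ihG =>
    by_cases h : PForm.sat Y (.or F G)
    · rw [PForm.reduct_or h]
      exact or_congr ihF ihG
    · exact PForm.htSat_iff_sat_reduct_of_not_sat hXY h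
  | imp F G ihF ihG =>
    by_cases h : PForm.sat Y (.imp F G)
    · rw [PForm.reduct_imp h]
      exact (and_iff_left h).trans (imp_congr ihF ihG)
    · exact PForm.htSat_iff_sat_reduct_of_not_sat hXY h
end

section
/- For any propositional theory Γ, a set Y of atoms is an equilibrium model of Γ if and only if Y is a stable model of Γ, where Y is a stable model of Γ iff Y is a minimal set (under inclusion) satisfying the reduct Γ^Y. -/
variable {α : Type}

/-- Y is an equilibrium model of Γ iff (Y,Y) ⊨ Γ and no proper subset Z of Y has (Z,Y) ⊨ Γ. -/
def EqModel (Γ : Set (PForm α)) (Y : Set α) : Prop :=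
  htSatTh Y Y Γ ∧ ∀ Z : Set α, Z ⊂ Y → ¬ htSatTh Z Y Γ

lemma ht_persist {X Y : Set α} (hXY : X ⊆ Y) :
    ∀ F : PForm α, PForm.htSat X Y F → PForm.sat Y F := by
  intro F
  induction F with
  | bot => exact id
  | atom a => exact fun h => hXY h
  | and F G ihF ihG => exact fun h => ⟨ihF h.1, ihG h.2⟩
  | or F G ihF ihG => exact fun h => h.elim (fun h => Or.inl (ihF h)) (fun h => Or.inr (ihG h))
  | imp F G ihF ihG => exact fun h => h.2

lemma ht_iff_reduct {X Y : Set α} (hXY : X ⊆ Y) :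
    ∀ F : PForm α, PForm.htSat X Y F ↔ PForm.sat X (PForm.reduct Y F) := by
  intro F
  induction F with
  | bot => exact Iff.rfl
  | atom a =>
    simp only [PForm.htSat, PForm.reduct]
    by_cases h : a ∈ Y
    · simp [h, PForm.sat]
    · simp [h, PForm.sat]; exact fun hx => h (hXY hx)
  | and F G ihF ihG =>
    simp only [PForm.htSat, PForm.reduct]
    by_cases h : PForm.sat Y (PForm.and F G)
    all_goals simp only [PForm.sat] at h
    · simp [h, PForm.sat, ihF, ihG]
    · simp [h, PForm.sat]
      intro hF hG
      exact h ⟨ht_persist hXY F hF, ht_persist hXY G hG⟩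
  | or F G ihF ihG =>
    simp only [PForm.htSat, PForm.reduct]
    by_cases h : PForm.sat Y (PForm.or F G)
    all_goals simp only [PForm.sat] at h
    · simp [h, PForm.sat, ihF, ihG]
    · simp [h, PForm.sat]
      exact ⟨fun hF => h (Or.inl (ht_persist hXY F hF)),
        fun hG => h (Or.inr (ht_persist hXY G hG))⟩
  | imp F G ihF ihG =>
    simp only [PForm.htSat, PForm.reduct]
    by_cases h : PForm.sat Y (PForm.imp F G)
    · rw [if_pos h]
      simp only [PForm.sat] at h
      simp only [PForm.sat, ihF, ihG]
      exact and_iff_left h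
    · rw [if_neg h]
      exact iff_of_false (fun hc => h hc.2) (fun hc => hc)

lemma htSatTh_iff_reductTh {X Y : Set α} (hXY : X ⊆ Y) (Γ : Set (PForm α)) :
    htSatTh X Y Γ ↔ satTh X (reductTh Y Γ) := by
  constructor
  · rintro h F ⟨G, hG, rfl⟩
    exact (ht_iff_reduct hXY G).mp (h G hG)
  · intro h F hF
    exact (ht_iff_reduct hXY F).mpr (h _ ⟨F, hF, rfl⟩)

/-- equilibrium models coincide with stable models. -/
theorem stmt3 (Γ : Set (PForm α)) (Y : Set α) :
    EqModel Γ Y ↔ StableModel Γ Y := by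
  constructor
  · rintro ⟨h1, h2⟩
    refine ⟨(htSatTh_iff_reductTh (le_refl Y) Γ).mp h1, fun Z hZ hs => h2 Z hZ ?_⟩
    exact (htSatTh_iff_reductTh hZ.le Γ).mpr hs
  · rintro ⟨h1, h2⟩
    refine ⟨(htSatTh_iff_reductTh (le_refl Y) Γ).mpr h1, fun Z hZ hs => h2 Z hZ ?_⟩
    exact (htSatTh_iff_reductTh hZ.le Γ).mp hs
end

section
/- For any two propositional theories Γ₁ and Γ₂, the following are equivalent: (i) for every theory Γ, Γ₁ ∪ Γ and Γ₂ ∪ Γ have the same stable models; (ii) Γ₁ and Γ₂ are satisfied by the same HT-interpretations; (iii) for every set X of atoms, Γ₁^X is classically equivalent to Γ₂^X. -/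
variable {α : Type}

section Aux

namespace PForm

variable {α : Type}

lemma ht_mono {X Y : Set α} (hXY : X ⊆ Y) : ∀ F : PForm α, htSat X Y F → sat Y F
  | bot, h => h
  | atom _, h => hXY h
  | and F G, h => ⟨ht_mono hXY F h.1, ht_mono hXY G h.2⟩
  | or F G, h => h.elim (fun h => Or.inl (ht_mono hXY F h)) (fun h => Or.inr (ht_mono hXY G h))
  | imp _ _, h => h.2

lemma ht_refl {Y : Set α} : ∀ F : PForm α, htSat Y Y F ↔ sat Y F
  | bot => Iff.rfl
  | atom _ => Iff.rfl
  | and F G => and_congr (ht_refl F) (ht_refl G)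
  | or F G => or_congr (ht_refl F) (ht_refl G)
  | imp F G => by
      constructor
      · exact fun h => h.2
      · exact fun h => ⟨fun hf => (ht_refl G).2 (h ((ht_refl F).1 hf)), h⟩

lemma sat_reduct {X Y : Set α} : ∀ F : PForm α, sat Y (reduct X F) ↔ htSat (Y ∩ X) X F
  | bot => Iff.rfl
  | atom a => by
      by_cases h : a ∈ X
      · simp [reduct, h, sat, htSat]
      · simp [reduct, h, sat, htSat]
  | and F G => by
      by_cases h : sat X (and F G)
      · simp only [reduct, if_pos h]
        exact and_congr (sat_reduct F) (sat_reduct G)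
      · simp only [reduct, if_neg h]
        exact ⟨False.elim, fun hh => absurd (ht_mono Set.inter_subset_right (and F G) hh) h⟩
  | or F G => by
      by_cases h : sat X (or F G)
      · simp only [reduct, if_pos h]
        exact or_congr (sat_reduct F) (sat_reduct G)
      · simp only [reduct, if_neg h]
        exact ⟨False.elim, fun hh => absurd (ht_mono Set.inter_subset_right (or F G) hh) h⟩
  | imp F G => by
      by_cases h : sat X (imp F G)
      · simp only [reduct, if_pos h]
        constructor
        · intro hh
          exact ⟨fun hf => (sat_reduct G).1 (hh ((sat_reduct F).2 hf)), h⟩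
        · intro hh hf
          exact (sat_reduct G).2 (hh.1 ((sat_reduct F).1 hf))
      · simp only [reduct, if_neg h]
        exact ⟨False.elim, fun hh => absurd hh.2 h⟩

end PForm

variable {α : Type}

lemma satTh_reductTh {X Y : Set α} (Γ : Set (PForm α)) :
    satTh Y (reductTh X Γ) ↔ htSatTh (Y ∩ X) X Γ := by
  constructor
  · intro h F hF
    exact (PForm.sat_reduct F).1 (h _ ⟨F, hF, rfl⟩)
  · rintro h _ ⟨F, hF, rfl⟩
    exact (PForm.sat_reduct F).2 (h F hF)

lemma stable_char (Δ : Set (PForm α)) (X : Set α) :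
    StableModel Δ X ↔ (htSatTh X X Δ ∧ ∀ Z, Z ⊂ X → ¬ htSatTh Z X Δ) := by
  unfold StableModel
  rw [satTh_reductTh, Set.inter_self]
  refine and_congr Iff.rfl (forall_congr' fun Z => ?_)
  constructor
  · intro h hZ hht
    exact h hZ ((satTh_reductTh Δ).2
      (by rwa [Set.inter_eq_self_of_subset_left hZ.subset]))
  · intro h hZ hs
    refine h hZ ?_
    have := (satTh_reductTh Δ).1 hs
    rwa [Set.inter_eq_self_of_subset_left hZ.subset] at this

lemma htSatTh_union {X Y : Set α} {A B : Set (PForm α)} :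
    htSatTh X Y (A ∪ B) ↔ htSatTh X Y A ∧ htSatTh X Y B := by
  constructor
  · exact fun h => ⟨fun F hF => h F (Or.inl hF), fun F hF => h F (Or.inr hF)⟩
  · rintro ⟨hA, hB⟩ F (hF | hF)
    · exact hA F hF
    · exact hB F hF

lemma key (Γ₁ Γ₂ : Set (PForm α))
    (h : ∀ (Γ : Set (PForm α)) (X : Set α), StableModel (Γ₁ ∪ Γ) X ↔ StableModel (Γ₂ ∪ Γ) X)
    {X Y : Set α} (hXY : X ⊆ Y) (h1 : htSatTh X Y Γ₁) : htSatTh X Y Γ₂ := by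
  by_contra h2
  by_cases hY : htSatTh Y Y Γ₂
  · -- Case: Y ⊨ Γ₂ classically
    have hXneY : X ≠ Y := fun he => h2 (he ▸ hY)
    have hXssY : X ⊂ Y := ⟨hXY, fun hsub => hXneY (Set.Subset.antisymm hXY hsub)⟩
    set Γ : Set (PForm α) := (PForm.atom '' X) ∪
      {F | ∃ p ∈ Y \ X, ∃ q ∈ Y \ X, F = PForm.imp (PForm.atom p) (PForm.atom q)} with hΓ
    have hst2 : StableModel (Γ₂ ∪ Γ) Y := by
      rw [stable_char]
      constructor
      · rintro F (hF | ⟨a, ha, rfl⟩ | ⟨p, hp, q, hq, rfl⟩)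
        · exact hY F hF
        · exact hXY ha
        · exact ⟨fun _ => hq.1, fun _ => hq.1⟩
      · intro Z hZ hht
        have hXZ : X ⊆ Z := fun a ha => hht _ (Or.inr (Or.inl ⟨a, ha, rfl⟩))
        have hZX : Z ⊆ X := by
          intro a haZ
          by_contra haX
          have haY : a ∈ Y := hZ.subset haZ
          have hYZ : Y ⊆ Z := by
            intro b hbY
            by_cases hbX : b ∈ X
            · exact hXZ hbX
            · exact (hht _ (Or.inr (Or.inr ⟨a, ⟨haY, haX⟩, b, ⟨hbY, hbX⟩, rfl⟩))).1 haZ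
          exact hZ.2 hYZ
        have hZeq : Z = X := Set.Subset.antisymm hZX hXZ
        subst hZeq
        exact h2 fun F hF => hht F (Or.inl hF)
    have hst1 : StableModel (Γ₁ ∪ Γ) Y := (h Γ Y).2 hst2
    rw [stable_char] at hst1
    refine hst1.2 X hXssY ?_
    rintro F (hF | ⟨a, ha, rfl⟩ | ⟨p, hp, q, hq, rfl⟩)
    · exact h1 F hF
    · exact ha
    · exact ⟨fun hpX => absurd hpX hp.2, fun _ => hq.1⟩
  · -- Case: Y ⊭ Γ₂ classically
    set Γ : Set (PForm α) := PForm.atom '' Y with hΓ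
    have hst : StableModel (Γ₁ ∪ Γ) Y := by
      rw [stable_char]
      constructor
      · rintro F (hF | ⟨a, ha, rfl⟩)
        · exact (PForm.ht_refl F).2 (PForm.ht_mono hXY F (h1 F hF))
        · exact ha
      · intro Z hZ hht
        obtain ⟨a, haY, haZ⟩ := Set.exists_of_ssubset hZ
        exact haZ (hht _ (Or.inr ⟨a, haY, rfl⟩))
    have hst2 : StableModel (Γ₂ ∪ Γ) Y := (h Γ Y).1 hst
    rw [stable_char] at hst2
    exact hY fun F hF => hst2.1 F (Or.inl hF)

end Aux


/-- strong equivalence = HT-equivalence = classical equivalence of all reducts. -/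
theorem stmt4 (Γ₁ Γ₂ : Set (PForm α)) :
    ((∀ (Γ : Set (PForm α)) (X : Set α),
        StableModel (Γ₁ ∪ Γ) X ↔ StableModel (Γ₂ ∪ Γ) X) ↔
      (∀ X Y : Set α, X ⊆ Y → (htSatTh X Y Γ₁ ↔ htSatTh X Y Γ₂))) ∧
    ((∀ X Y : Set α, X ⊆ Y → (htSatTh X Y Γ₁ ↔ htSatTh X Y Γ₂)) ↔
      (∀ X Y : Set α, satTh Y (reductTh X Γ₁) ↔ satTh Y (reductTh X Γ₂))) := by
  constructor
  · constructor
    · intro h X Y hXY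
      exact ⟨key Γ₁ Γ₂ h hXY, key Γ₂ Γ₁ (fun Γ X => (h Γ X).symm) hXY⟩
    · intro hht Γ X
      rw [stable_char, stable_char]
      refine and_congr ?_ ?_
      · rw [htSatTh_union, htSatTh_union]
        exact and_congr (hht X X (subset_refl X)) Iff.rfl
      · refine forall_congr' fun Z => ?_
        constructor <;> intro h hZ hs <;> refine h hZ ?_ <;>
          rw [htSatTh_union] at hs ⊢
        · exact ⟨(hht Z X hZ.subset).2 hs.1, hs.2⟩
        · exact ⟨(hht Z X hZ.subset).1 hs.1, hs.2⟩
  · constructor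
    · intro hht X Y
      rw [satTh_reductTh, satTh_reductTh]
      exact hht (Y ∩ X) X Set.inter_subset_right
    · intro hcl X Y hXY
      have h1 := hcl Y X
      rw [satTh_reductTh, satTh_reductTh, Set.inter_eq_self_of_subset_left hXY] at h1
      exact h1
end

section
/- Every stable model of a propositional theory Γ consists only of head atoms of Γ, i.e., atoms having a strictly positive occurrence (an occurrence in the antecedent of zero implications) in some formula of Γ. -/
variable {α : Type}

lemma sat_of_sat_reduct {X Y : Set α} (hYX : Y ⊆ X) :
    ∀ F : PForm α, PForm.sat Y (PForm.reduct X F) → PForm.sat X F := by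
  intro F
  induction F with
  | bot => exact fun h => h
  | atom a =>
      simp only [PForm.reduct]
      split
      · intro _; assumption
      · exact fun h => h.elim
  | and F G ihF ihG =>
      simp only [PForm.reduct]
      split
      · intro _; assumption
      · exact fun h => h.elim
  | or F G ihF ihG =>
      simp only [PForm.reduct]
      split
      · intro _; assumption
      · exact fun h => h.elim
  | imp F G ihF ihG =>
      simp only [PForm.reduct]
      split
      · intro _; assumption
      · exact fun h => h.elim

lemma sat_inter_reduct {X S : Set α} :
    ∀ F : PForm α, PForm.sat X F → PForm.headAtoms F ⊆ S →
      PForm.sat (X ∩ S) (PForm.reduct X F) := by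
  intro F
  induction F with
  | bot => exact fun h _ => h
  | atom a =>
      intro h hS
      have h' : a ∈ X := h
      simp only [PForm.reduct, if_pos h']
      exact ⟨h', hS rfl⟩
  | and F G ihF ihG =>
      intro h hS
      simp only [PForm.reduct, if_pos h]
      exact ⟨ihF h.1 fun a ha => hS (Or.inl ha),
             ihG h.2 fun a ha => hS (Or.inr ha)⟩
  | or F G ihF ihG =>
      intro h hS
      simp only [PForm.reduct, if_pos h]
      rcases h with h | h
      · exact Or.inl (ihF h fun a ha => hS (Or.inl ha))
      · exact Or.inr (ihG h fun a ha => hS (Or.inr ha))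
  | imp F G ihF ihG =>
      intro h hS
      simp only [PForm.reduct, if_pos h]
      intro hF
      have hXF : PForm.sat X F :=
        sat_of_sat_reduct (Set.inter_subset_left) F hF
      exact ihG (h hXF) hS

/-- each stable model consists of head atoms. -/
theorem stmt5 (Γ : Set (PForm α)) (X : Set α) (h : StableModel Γ X) :
    X ⊆ theoryHeadAtoms Γ := by
  set H := theoryHeadAtoms Γ
  have hsat : satTh (X ∩ H) (reductTh X Γ) := by
    rintro _ ⟨F, hF, rfl⟩
    have hXF : PForm.sat X F :=
      sat_of_sat_reduct (le_refl X) F (h.1 _ ⟨F, hF, rfl⟩)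
    exact sat_inter_reduct F hXF
      (fun a ha => Set.mem_biUnion hF ha)
  by_contra hc
  have hss : X ∩ H ⊂ X := by
    constructor
    · exact Set.inter_subset_left
    · intro hle
      apply hc
      intro a ha
      exact (hle ha).2
  exact h.2 _ hss hsat
end

section
/- Lemma on Explicit Definitions: Let Γ be a propositional theory and Q a set of atoms not occurring in Γ. For each q ∈ Q, let Def(q) be a formula containing no atoms from Q. Then the map X ↦ X \ Q is a one-to-one correspondence between the stable models of Γ ∪ {Def(q) → q : q ∈ Q} and the stable models of Γ. -/
variable {α : Type}

namespace PForm

variable {α : Type}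

theorem sat_congr {X X' : Set α} (F : PForm α)
    (h : ∀ a ∈ atomsOf F, (a ∈ X ↔ a ∈ X')) : sat X F ↔ sat X' F := by
  induction F with
  | bot => exact Iff.rfl
  | atom a => exact h a rfl
  | and F G ihF ihG =>
      have hF := ihF fun a ha => h a (Set.mem_union_left _ ha)
      have hG := ihG fun a ha => h a (Set.mem_union_right _ ha)
      simp only [sat]; rw [hF, hG]
  | or F G ihF ihG =>
      have hF := ihF fun a ha => h a (Set.mem_union_left _ ha)
      have hG := ihG fun a ha => h a (Set.mem_union_right _ ha)
      simp only [sat]; rw [hF, hG]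
  | imp F G ihF ihG =>
      have hF := ihF fun a ha => h a (Set.mem_union_left _ ha)
      have hG := ihG fun a ha => h a (Set.mem_union_right _ ha)
      simp only [sat]; rw [hF, hG]

theorem atomsOf_reduct (X : Set α) (F : PForm α) :
    atomsOf (reduct X F) ⊆ atomsOf F := by
  induction F with
  | bot => simp [reduct, atomsOf]
  | atom a =>
      simp only [reduct]; split
      · exact subset_rfl
      · simp [atomsOf]
  | and F G ihF ihG =>
      simp only [reduct]; split
      · exact Set.union_subset_union ihF ihG
      · simp [atomsOf]
  | or F G ihF ihG =>
      simp only [reduct]; split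
      · exact Set.union_subset_union ihF ihG
      · simp [atomsOf]
  | imp F G ihF ihG =>
      simp only [reduct]; split
      · exact Set.union_subset_union ihF ihG
      · simp [atomsOf]

theorem reduct_congr {X X' : Set α} (F : PForm α)
    (h : ∀ a ∈ atomsOf F, (a ∈ X ↔ a ∈ X')) : reduct X F = reduct X' F := by
  induction F with
  | bot => rfl
  | atom a =>
      have := h a rfl
      simp only [reduct]
      by_cases hx : a ∈ X
      · rw [if_pos hx, if_pos (this.mp hx)]
      · rw [if_neg hx, if_neg (fun hx' => hx (this.mpr hx'))]
  | and F G ihF ihG =>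
      have hc : sat X (and F G) ↔ sat X' (and F G) := sat_congr _ h
      have hF := ihF fun a ha => h a (Set.mem_union_left _ ha)
      have hG := ihG fun a ha => h a (Set.mem_union_right _ ha)
      simp only [reduct]
      by_cases hs : sat X (and F G)
      · rw [if_pos hs, if_pos (hc.mp hs), hF, hG]
      · rw [if_neg hs, if_neg (fun hs' => hs (hc.mpr hs'))]
  | or F G ihF ihG =>
      have hc : sat X (or F G) ↔ sat X' (or F G) := sat_congr _ h
      have hF := ihF fun a ha => h a (Set.mem_union_left _ ha)
      have hG := ihG fun a ha => h a (Set.mem_union_right _ ha)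
      simp only [reduct]
      by_cases hs : sat X (or F G)
      · rw [if_pos hs, if_pos (hc.mp hs), hF, hG]
      · rw [if_neg hs, if_neg (fun hs' => hs (hc.mpr hs'))]
  | imp F G ihF ihG =>
      have hc : sat X (imp F G) ↔ sat X' (imp F G) := sat_congr _ h
      have hF := ihF fun a ha => h a (Set.mem_union_left _ ha)
      have hG := ihG fun a ha => h a (Set.mem_union_right _ ha)
      simp only [reduct]
      by_cases hs : sat X (imp F G)
      · rw [if_pos hs, if_pos (hc.mp hs), hF, hG]
      · rw [if_neg hs, if_neg (fun hs' => hs (hc.mpr hs'))]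

theorem sat_reduct_self (X : Set α) (F : PForm α) :
    sat X (reduct X F) ↔ sat X F := by
  induction F with
  | bot => exact Iff.rfl
  | atom a =>
      simp only [reduct]; split
      · exact Iff.rfl
      · simp only [sat]; tauto
  | and F G ihF ihG =>
      simp only [reduct]; split
      · simp only [sat]; rw [ihF, ihG]
      · simp only [sat]; tauto
  | or F G ihF ihG =>
      simp only [reduct]; split
      · simp only [sat]; rw [ihF, ihG]
      · simp only [sat]; tauto
  | imp F G ihF ihG =>
      simp only [reduct]; split
      · simp only [sat]; rw [ihF, ihG]
      · simp only [sat]; tauto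

theorem sat_of_sat_reduct {Z X : Set α} (F : PForm α)
    (h : sat Z (reduct X F)) : sat X F := by
  cases F with
  | bot => exact h
  | atom a =>
      simp only [reduct] at h; split at h
      · assumption
      · exact h.elim
  | and F G =>
      simp only [reduct] at h
      split at h
      · assumption
      · exact h.elim
  | or F G =>
      simp only [reduct] at h
      split at h
      · assumption
      · exact h.elim
  | imp F G =>
      simp only [reduct] at h
      split at h
      · assumption
      · exact h.elim

end PForm

section AuxStmt9

variable {α : Type}

lemma satTh_reductTh_iff {X Z : Set α} {Γ : Set (PForm α)} :
    satTh Z (reductTh X Γ) ↔ ∀ F ∈ Γ, PForm.sat Z (PForm.reduct X F) := by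
  constructor
  · intro h F hF; exact h _ ⟨F, hF, rfl⟩
  · rintro h _ ⟨F, hF, rfl⟩; exact h F hF

lemma agree_of_diff_eq {X X' Q : Set α} (h : X \ Q = X' \ Q) {F : PForm α}
    (hF : ∀ a ∈ PForm.atomsOf F, a ∉ Q) :
    ∀ a ∈ PForm.atomsOf F, (a ∈ X ↔ a ∈ X') := by
  intro a ha
  have h1 : a ∈ X \ Q ↔ a ∈ X' \ Q := by rw [h]
  have h2 := hF a ha
  simp only [Set.mem_diff] at h1
  tauto

lemma sat_reduct_transfer {Z W X : Set α} (F : PForm α)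
    (h : ∀ a ∈ PForm.atomsOf F, (a ∈ Z ↔ a ∈ W)) :
    PForm.sat Z (PForm.reduct X F) ↔ PForm.sat W (PForm.reduct X F) :=
  PForm.sat_congr _ fun a ha => h a (PForm.atomsOf_reduct X F ha)

lemma keyA {Γ : Set (PForm α)} {Q : Set α} {Def : α → PForm α}
    (hQΓ : ∀ F ∈ Γ, ∀ q ∈ Q, q ∉ PForm.atomsOf F)
    (hDef : ∀ q ∈ Q, ∀ p ∈ Q, p ∉ PForm.atomsOf (Def q))
    {X : Set α}
    (hX : StableModel (Γ ∪ {G | ∃ q ∈ Q, G = PForm.imp (Def q) (PForm.atom q)}) X) :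
    ∀ q ∈ Q, (q ∈ X ↔ PForm.sat X (Def q)) := by
  obtain ⟨hsat, hmin⟩ := hX
  have hsatR := satTh_reductTh_iff.mp hsat
  have hsatF : ∀ F ∈ Γ ∪ {G | ∃ q ∈ Q, G = PForm.imp (Def q) (PForm.atom q)},
      PForm.sat X F := fun F hF => (PForm.sat_reduct_self X F).mp (hsatR F hF)
  intro q hq
  constructor
  · intro hqX
    by_contra hns
    have hZX : X \ {q} ⊂ X := by
      constructor
      · exact Set.diff_subset
      · intro hsub
        exact (hsub hqX).2 rfl
    apply hmin (X \ {q}) hZX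
    rw [satTh_reductTh_iff]
    intro F hF
    have hdiffeq : X \ ({q} : Set α) = (X \ {q}) \ {q} := by
      simp [Set.diff_diff]
    rcases hF with hFΓ | ⟨p, hp, rfl⟩
    · have hagree := agree_of_diff_eq hdiffeq
        (F := F) (fun a ha (haq : a ∈ ({q} : Set α)) => hQΓ F hFΓ q hq (haq ▸ ha))
      exact (sat_reduct_transfer F hagree).mp (hsatR F (Or.inl hFΓ))
    · have hsX : PForm.sat X (PForm.imp (Def p) (PForm.atom p)) :=
        hsatF _ (Or.inr ⟨p, hp, rfl⟩)
      simp only [PForm.reduct, if_pos hsX]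
      intro hZr
      have hagree := agree_of_diff_eq hdiffeq
        (F := Def p) (fun a ha (haq : a ∈ ({q} : Set α)) => hDef p hp q hq (haq ▸ ha))
      have hXr : PForm.sat X (PForm.reduct X (Def p)) :=
        (sat_reduct_transfer (Def p) hagree).mpr hZr
      have hXDef : PForm.sat X (Def p) := (PForm.sat_reduct_self X (Def p)).mp hXr
      have hpX : p ∈ X := hsX hXDef
      by_cases hpq : p = q
      · exact absurd (hpq ▸ hXDef) hns
      · simp only [PForm.reduct, if_pos hpX]
        exact ⟨hpX, fun h => hpq h⟩
  · intro h
    exact hsatF (PForm.imp (Def q) (PForm.atom q)) (Or.inr ⟨q, hq, rfl⟩) h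

lemma keyA' {Γ : Set (PForm α)} {Q : Set α} {Def : α → PForm α}
    (hQΓ : ∀ F ∈ Γ, ∀ q ∈ Q, q ∉ PForm.atomsOf F)
    (hDef : ∀ q ∈ Q, ∀ p ∈ Q, p ∉ PForm.atomsOf (Def q))
    {X : Set α}
    (hX : StableModel (Γ ∪ {G | ∃ q ∈ Q, G = PForm.imp (Def q) (PForm.atom q)}) X) :
    ∀ q ∈ Q, (q ∈ X ↔ PForm.sat (X \ Q) (Def q)) := by
  intro q hq
  have h1 := keyA hQΓ hDef hX q hq
  have h2 : PForm.sat X (Def q) ↔ PForm.sat (X \ Q) (Def q) := by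
    apply PForm.sat_congr
    apply agree_of_diff_eq (Q := Q) (by simp [Set.diff_diff])
    exact fun a ha haQ => hDef q hq a haQ ha
  exact h1.trans h2

end AuxStmt9

section Aux2

variable {α : Type}

lemma keyB {Γ : Set (PForm α)} {Q : Set α} {Def : α → PForm α}
    (hQΓ : ∀ F ∈ Γ, ∀ q ∈ Q, q ∉ PForm.atomsOf F)
    (hDef : ∀ q ∈ Q, ∀ p ∈ Q, p ∉ PForm.atomsOf (Def q))
    {X : Set α}
    (hX : StableModel (Γ ∪ {G | ∃ q ∈ Q, G = PForm.imp (Def q) (PForm.atom q)}) X) :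
    X = (X \ Q) ∪ {q | q ∈ Q ∧ PForm.sat (X \ Q) (Def q)} := by
  ext x
  simp only [Set.mem_union, Set.mem_diff, Set.mem_setOf_eq]
  constructor
  · intro hx
    by_cases hxQ : x ∈ Q
    · exact Or.inr ⟨hxQ, (keyA' hQΓ hDef hX x hxQ).mp hx⟩
    · exact Or.inl ⟨hx, hxQ⟩
  · rintro (⟨hx, _⟩ | ⟨hxQ, hs⟩)
    · exact hx
    · exact (keyA' hQΓ hDef hX x hxQ).mpr hs

lemma mapsToStable {Γ : Set (PForm α)} {Q : Set α} {Def : α → PForm α}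
    (hQΓ : ∀ F ∈ Γ, ∀ q ∈ Q, q ∉ PForm.atomsOf F)
    (hDef : ∀ q ∈ Q, ∀ p ∈ Q, p ∉ PForm.atomsOf (Def q))
    {X : Set α}
    (hX : StableModel (Γ ∪ {G | ∃ q ∈ Q, G = PForm.imp (Def q) (PForm.atom q)}) X) :
    StableModel Γ (X \ Q) := by
  have hsX : ∀ q ∈ Q, PForm.sat X (PForm.imp (Def q) (PForm.atom q)) := by
    intro q hq
    exact fun h => (keyA hQΓ hDef hX q hq).mpr h
  obtain ⟨hsat, hmin⟩ := hX
  have hsatR := satTh_reductTh_iff.mp hsat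
  have hnotQ : ∀ F ∈ Γ, ∀ a ∈ PForm.atomsOf F, a ∉ Q :=
    fun F hF a ha haQ => hQΓ F hF a haQ ha
  have hdd : (X \ Q) \ Q = X \ Q := by simp [Set.diff_diff]
  have hredeq : ∀ F ∈ Γ, PForm.reduct (X \ Q) F = PForm.reduct X F := fun F hF =>
    PForm.reduct_congr F (agree_of_diff_eq hdd (hnotQ F hF))
  constructor
  · rw [satTh_reductTh_iff]
    intro F hF
    rw [hredeq F hF]
    have hag := agree_of_diff_eq hdd (hnotQ F hF)
    exact (sat_reduct_transfer F hag).mpr (hsatR F (Or.inl hF))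
  · intro Z hZ hZsat
    rw [satTh_reductTh_iff] at hZsat
    have hZQ : Z \ Q = Z := by
      ext a
      simp only [Set.mem_diff, and_iff_left_iff_imp]
      exact fun ha => (hZ.1 ha).2
    have hWQ : (Z ∪ X ∩ Q) \ Q = Z := by
      ext a
      simp only [Set.mem_diff, Set.mem_union, Set.mem_inter_iff]
      constructor
      · rintro ⟨ha | ⟨_, haQ⟩, hnQ⟩
        · exact ha
        · exact absurd haQ hnQ
      · intro ha
        exact ⟨Or.inl ha, (hZ.1 ha).2⟩
    have hWX : Z ∪ X ∩ Q ⊂ X := by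
      constructor
      · intro a ha
        rcases ha with ha | ⟨ha, _⟩
        · exact (hZ.1 ha).1
        · exact ha
      · intro hXW
        apply hZ.2
        intro a ha
        rcases hXW ha.1 with h | ⟨_, haQ⟩
        · exact h
        · exact absurd haQ ha.2
    apply hmin _ hWX
    rw [satTh_reductTh_iff]
    intro F hF
    rcases hF with hFΓ | ⟨p, hp, rfl⟩
    · rw [← hredeq F hFΓ]
      have hag : ∀ a ∈ PForm.atomsOf F, (a ∈ Z ↔ a ∈ Z ∪ X ∩ Q) :=
        agree_of_diff_eq (hZQ.trans hWQ.symm) (hnotQ F hFΓ)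
      exact (sat_reduct_transfer F hag).mp (hZsat F hFΓ)
    · simp only [PForm.reduct, if_pos (hsX p hp)]
      intro hWr
      have hXDef : PForm.sat X (Def p) := PForm.sat_of_sat_reduct _ hWr
      have hpX : p ∈ X := hsX p hp hXDef
      simp only [PForm.reduct, if_pos hpX]
      exact Or.inr ⟨hpX, hp⟩

lemma stable_disj_Q {Γ : Set (PForm α)} {Q : Set α}
    (hQΓ : ∀ F ∈ Γ, ∀ q ∈ Q, q ∉ PForm.atomsOf F)
    {Y : Set α} (hY : StableModel Γ Y) : ∀ q ∈ Q, q ∉ Y := by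
  intro q hq hqY
  obtain ⟨hsat, hmin⟩ := hY
  have hsatR := satTh_reductTh_iff.mp hsat
  apply hmin (Y \ {q})
  · constructor
    · exact Set.diff_subset
    · intro hsub
      exact (hsub hqY).2 rfl
  · rw [satTh_reductTh_iff]
    intro F hF
    have hdiffeq : Y \ ({q} : Set α) = (Y \ {q}) \ {q} := by simp [Set.diff_diff]
    have hag := agree_of_diff_eq hdiffeq
      (F := F) (fun a ha (haq : a ∈ ({q} : Set α)) => hQΓ F hF q hq (haq ▸ ha))
    exact (sat_reduct_transfer F hag).mp (hsatR F hF)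

lemma surjStable {Γ : Set (PForm α)} {Q : Set α} {Def : α → PForm α}
    (hQΓ : ∀ F ∈ Γ, ∀ q ∈ Q, q ∉ PForm.atomsOf F)
    (hDef : ∀ q ∈ Q, ∀ p ∈ Q, p ∉ PForm.atomsOf (Def q))
    {Y : Set α} (hY : StableModel Γ Y) :
    StableModel (Γ ∪ {G | ∃ q ∈ Q, G = PForm.imp (Def q) (PForm.atom q)})
      (Y ∪ {q | q ∈ Q ∧ PForm.sat Y (Def q)}) ∧
    (Y ∪ {q | q ∈ Q ∧ PForm.sat Y (Def q)}) \ Q = Y := by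
  have hYQ : ∀ q ∈ Q, q ∉ Y := stable_disj_Q hQΓ hY
  set X := Y ∪ {q | q ∈ Q ∧ PForm.sat Y (Def q)} with hXdef
  have hnotQ : ∀ F ∈ Γ, ∀ a ∈ PForm.atomsOf F, a ∉ Q :=
    fun F hF a ha haQ => hQΓ F hF a haQ ha
  have hXQ : X \ Q = Y := by
    ext a
    simp only [hXdef, Set.mem_diff, Set.mem_union, Set.mem_setOf_eq]
    constructor
    · rintro ⟨ha | ⟨haQ, _⟩, hnQ⟩
      · exact ha
      · exact absurd haQ hnQ
    · intro ha
      exact ⟨Or.inl ha, fun haQ => hYQ a haQ ha⟩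
  have hYd : Y \ Q = Y := by
    ext a
    simp only [Set.mem_diff, and_iff_left_iff_imp]
    exact fun ha haQ => hYQ a haQ ha
  have hagXY : X \ Q = Y \ Q := hXQ.trans hYd.symm
  have hDefnotQ : ∀ q ∈ Q, ∀ a ∈ PForm.atomsOf (Def q), a ∉ Q :=
    fun q hq a ha haQ => hDef q hq a haQ ha
  have hsatDef : ∀ q ∈ Q, (PForm.sat X (Def q) ↔ PForm.sat Y (Def q)) :=
    fun q hq => PForm.sat_congr _ (agree_of_diff_eq hagXY (hDefnotQ q hq))
  have hqX : ∀ q ∈ Q, (q ∈ X ↔ PForm.sat Y (Def q)) := by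
    intro q hq
    constructor
    · rintro (hqY | ⟨_, hs⟩)
      · exact absurd hqY (hYQ q hq)
      · exact hs
    · intro hs
      exact Or.inr ⟨hq, hs⟩
  have hsX : ∀ q ∈ Q, PForm.sat X (PForm.imp (Def q) (PForm.atom q)) := by
    intro q hq h
    exact (hqX q hq).mpr ((hsatDef q hq).mp h)
  obtain ⟨hsatY, hminY⟩ := hY
  have hsatRY := satTh_reductTh_iff.mp hsatY
  have hredeq : ∀ F ∈ Γ, PForm.reduct X F = PForm.reduct Y F := fun F hF =>
    PForm.reduct_congr F (agree_of_diff_eq hagXY (hnotQ F hF))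
  refine ⟨⟨?_, ?_⟩, hXQ⟩
  · rw [satTh_reductTh_iff]
    intro F hF
    rcases hF with hFΓ | ⟨p, hp, rfl⟩
    · rw [hredeq F hFΓ]
      have hag := agree_of_diff_eq hagXY (hnotQ F hFΓ)
      exact (sat_reduct_transfer F hag).mpr (hsatRY F hFΓ)
    · simp only [PForm.reduct, if_pos (hsX p hp)]
      intro hr
      have hpX : p ∈ X := hsX p hp ((PForm.sat_reduct_self X (Def p)).mp hr)
      simp only [PForm.reduct, if_pos hpX]
      exact hpX
  · intro W hW hWsat
    rw [satTh_reductTh_iff] at hWsat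
    have hWY : W \ Q ⊆ Y := by
      rw [← hXQ]
      exact Set.diff_subset_diff_left hW.1
    have hWQd : (W \ Q) \ Q = W \ Q := by simp [Set.diff_diff]
    have hZsat : satTh (W \ Q) (reductTh Y Γ) := by
      rw [satTh_reductTh_iff]
      intro F hF
      rw [← hredeq F hF]
      have hag : ∀ a ∈ PForm.atomsOf F, (a ∈ W ↔ a ∈ W \ Q) :=
        agree_of_diff_eq hWQd.symm (hnotQ F hF)
      exact (sat_reduct_transfer F hag).mp (hWsat F (Or.inl hF))
    have hWQeq : W \ Q = Y := by
      by_contra hne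
      exact hminY (W \ Q) ⟨hWY, fun h => hne (Set.Subset.antisymm hWY h)⟩ hZsat
    obtain ⟨q, hqXmem, hqW⟩ : ∃ q, q ∈ X ∧ q ∉ W := by
      by_contra h
      push_neg at h
      exact hW.2 h
    have hqQ : q ∈ Q := by
      by_contra hqQ
      have h1 : q ∈ X \ Q := ⟨hqXmem, hqQ⟩
      rw [hXQ, ← hWQeq] at h1
      exact hqW h1.1
    have hsYq : PForm.sat Y (Def q) := (hqX q hqQ).mp hqXmem
    have hsXq : PForm.sat X (Def q) := (hsatDef q hqQ).mpr hsYq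
    have hrX : PForm.sat X (PForm.reduct X (Def q)) :=
      (PForm.sat_reduct_self X (Def q)).mpr hsXq
    have hagWX : ∀ a ∈ PForm.atomsOf (Def q), (a ∈ X ↔ a ∈ W) :=
      agree_of_diff_eq (hXQ.trans hWQeq.symm) (hDefnotQ q hqQ)
    have hrW : PForm.sat W (PForm.reduct X (Def q)) :=
      (sat_reduct_transfer _ hagWX).mp hrX
    have hWimp := hWsat _ (Or.inr ⟨q, hqQ, rfl⟩)
    simp only [PForm.reduct, if_pos (hsX q hqQ)] at hWimp
    have := hWimp hrW
    simp only [PForm.reduct, if_pos hqXmem] at this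
    exact hqW this

end Aux2


/-- Lemma on Explicit Definitions. -/
theorem stmt9 (Γ : Set (PForm α)) (Q : Set α) (Def : α → PForm α)
    (hQΓ : ∀ F ∈ Γ, ∀ q ∈ Q, q ∉ PForm.atomsOf F)
    (hDef : ∀ q ∈ Q, ∀ p ∈ Q, p ∉ PForm.atomsOf (Def q)) :
    Set.BijOn (fun X => X \ Q)
      {X : Set α | StableModel
        (Γ ∪ {G | ∃ q ∈ Q, G = PForm.imp (Def q) (PForm.atom q)}) X}
      {Y : Set α | StableModel Γ Y} := by
  refine ⟨?_, ?_, ?_⟩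
  · intro X hX
    exact mapsToStable hQΓ hDef hX
  · intro X₁ h₁ X₂ h₂ heq
    simp only at heq
    rw [keyB hQΓ hDef h₁, keyB hQΓ hDef h₂, heq]
  · intro Y hY
    obtain ⟨hst, hXQ⟩ := surjStable hQΓ hDef hY
    exact ⟨_, hst, hXQ⟩
end

section
/- Let F be a propositional formula, S a set of atoms, and X, Y sets of atoms with Y ⊆ X. (a) If every positive occurrence of an atom from S in F is in the scope of negation and Y ⊨ F^X, then Y \ S ⊨ F^X. (b) If every negative occurrence of an atom from S in F is in the scope of negation and Y \ S ⊨ F^X, then Y ⊨ F^X. -/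
variable {α : Type}

/-- `occOK S b F` holds when every occurrence of an atom from S in F whose polarity is `b`
(`true` = positive, i.e. in the antecedent of an even number of implications) lies in the
scope of negation (inside a subformula of the form `G → ⊥`). -/
def occOK (S : Set α) : Bool → PForm α → Prop
  | _, PForm.bot => True
  | b, PForm.atom a => b = false ∨ a ∉ S
  | b, PForm.and F G => occOK S b F ∧ occOK S b G
  | b, PForm.or F G => occOK S b F ∧ occOK S b G
  | _, PForm.imp _ PForm.bot => True
  | b, PForm.imp F G => occOK S (!b) F ∧ occOK S b G

open PForm in
lemma sat_reduct_sat {F : PForm α} {X Z : Set α} (hZX : Z ⊆ X) :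
    sat Z (reduct X F) → sat X F := by
  induction F with
  | bot => simp [reduct, sat]
  | atom a =>
    simp only [reduct, sat]
    split <;> simp_all [sat]
  | and F G ihF ihG => simp only [reduct]; split <;> simp_all [sat]
  | or F G ihF ihG => simp only [reduct]; split <;> simp_all [sat]
  | imp F G ihF ihG => simp only [reduct]; split <;> simp_all [sat]

open PForm in
lemma occOK_imp {S : Set α} {b : Bool} {F G : PForm α} (hG : G ≠ PForm.bot) :
    occOK S b (PForm.imp F G) → occOK S (!b) F ∧ occOK S b G := by
  cases G <;> simp_all [occOK]

theorem stmt11 (F : PForm α) (S : Set α) (X Y : Set α) (hYX : Y ⊆ X) :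
    (occOK S true F → PForm.sat Y (PForm.reduct X F) →
      PForm.sat (Y \ S) (PForm.reduct X F)) ∧
    (occOK S false F → PForm.sat (Y \ S) (PForm.reduct X F) →
      PForm.sat Y (PForm.reduct X F)) := by
  have hYX' : Y \ S ⊆ X := fun a ha => hYX ha.1
  induction F with
  | bot => simp [PForm.reduct, PForm.sat]
  | atom a =>
    simp only [PForm.reduct]
    split
    · constructor
      · rintro (h | h) hy
        · exact absurd h (by simp)
        · exact ⟨hy, h⟩
      · rintro _ hy
        exact hy.1
    · simp [PForm.sat]
  | and F G ihF ihG =>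
    simp only [PForm.reduct]
    split
    · simp only [PForm.sat, occOK] at *
      exact ⟨fun h hs => ⟨ihF.1 h.1 hs.1, ihG.1 h.2 hs.2⟩,
             fun h hs => ⟨ihF.2 h.1 hs.1, ihG.2 h.2 hs.2⟩⟩
    · simp [PForm.sat]
  | or F G ihF ihG =>
    simp only [PForm.reduct]
    split
    · simp only [PForm.sat, occOK] at *
      refine ⟨fun h hs => ?_, fun h hs => ?_⟩
      · rcases hs with hs | hs
        · exact Or.inl (ihF.1 h.1 hs)
        · exact Or.inr (ihG.1 h.2 hs)
      · rcases hs with hs | hs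
        · exact Or.inl (ihF.2 h.1 hs)
        · exact Or.inr (ihG.2 h.2 hs)
    · simp [PForm.sat]
  | imp F G ihF ihG =>
    simp only [PForm.reduct]
    split
    case isTrue hX =>
      by_cases hG : G = PForm.bot
      · subst hG
        have hb : ¬ PForm.sat X F := hX
        constructor
        · intro _ _ h
          exact absurd (sat_reduct_sat hYX' h) hb
        · intro _ _ h
          exact absurd (sat_reduct_sat hYX h) hb
      · simp only [PForm.sat]
        constructor
        · intro hocc h hs
          obtain ⟨hFo, hGo⟩ := occOK_imp hG hocc
          exact ihG.1 hGo (h (ihF.2 (by simpa using hFo) hs))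
        · intro hocc h hs
          obtain ⟨hFo, hGo⟩ := occOK_imp hG hocc
          exact ihG.2 hGo (h (ihF.1 (by simpa using hFo) hs))
    case isFalse => simp [PForm.sat]
end

section
/- Let A = op⟨{F₁=w₁,...,Fₙ=wₙ}⟩ ≺ N be an antimonotone aggregate. Then the formula ⋀_{I : ¬(op(W_I) ≺ N)} ((⋀_{i∈I} Fᵢ) → (⋁_{i∈Ī} Fᵢ)) is strongly equivalent to ⋀_{I : ¬(op(W_I) ≺ N)} ¬(⋀_{i∈I} Fᵢ), where W_I = {wᵢ : i∈I} and Ī = {1,...,n} \ I. -/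
variable {α : Type}

def listAnd : List (PForm α) → PForm α
  | [] => PForm.top
  | F :: l => PForm.and F (listAnd l)

def listOr : List (PForm α) → PForm α
  | [] => PForm.bot
  | F :: l => PForm.or F (listOr l)

noncomputable def finsetAnd {ι : Type} (s : Finset ι) (f : ι → PForm α) : PForm α :=
  listAnd (s.toList.map f)

noncomputable def finsetOr {ι : Type} (s : Finset ι) (f : ι → PForm α) : PForm α :=
  listOr (s.toList.map f)

open Classical in
/-- `satAgg X F w P` : X satisfies the aggregate op⟨{F₁=w₁,...,Fₙ=wₙ}⟩ ≺ N, where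
`P W` stands for `op(W) ≺ N`. -/
noncomputable def satAgg {n : ℕ} (X : Set α) (F : Fin n → PForm α) (w : Fin n → ℝ)
    (P : Multiset ℝ → Prop) : Prop :=
  P (Multiset.map w (Finset.filter (fun i => PForm.sat X (F i)) Finset.univ).val)

open Classical in
/-- The propositional formula corresponding to the aggregate:
⋀_{I : ¬ P(W_I)} ((⋀_{i∈I} Fᵢ) → (⋁_{i∈Ī} Fᵢ)). -/
noncomputable def aggFormula {n : ℕ} (F : Fin n → PForm α) (w : Fin n → ℝ)
    (P : Multiset ℝ → Prop) : PForm α :=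
  finsetAnd (Finset.filter (fun I : Finset (Fin n) => ¬ P (Multiset.map w I.val)) Finset.univ)
    (fun I => PForm.imp (finsetAnd I F) (finsetOr Iᶜ F))

section Aux

lemma satReduct_imp_sat {X Y : Set α} : ∀ {G : PForm α},
    PForm.sat Y (PForm.reduct X G) → PForm.sat X G := by
  intro G
  induction G with
  | bot => simp [PForm.reduct, PForm.sat]
  | atom a => simp only [PForm.reduct]; split_ifs with h <;> simp [PForm.sat, h]
  | and A B ihA ihB => simp only [PForm.reduct]; split_ifs with h <;> simp_all [PForm.sat]
  | or A B ihA ihB => simp only [PForm.reduct]; split_ifs with h <;> simp_all [PForm.sat]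
  | imp A B ihA ihB => simp only [PForm.reduct]; split_ifs with h <;> simp_all [PForm.sat]

lemma R_and {X Y : Set α} {A B : PForm α} :
    PForm.sat Y (PForm.reduct X (PForm.and A B)) ↔
      PForm.sat Y (PForm.reduct X A) ∧ PForm.sat Y (PForm.reduct X B) := by
  simp only [PForm.reduct]
  split_ifs with h
  · simp [PForm.sat]
  · simp only [PForm.sat, false_iff]
    rintro ⟨hA, hB⟩
    exact h ⟨satReduct_imp_sat hA, satReduct_imp_sat hB⟩

lemma R_or {X Y : Set α} {A B : PForm α} :
    PForm.sat Y (PForm.reduct X (PForm.or A B)) ↔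
      PForm.sat Y (PForm.reduct X A) ∨ PForm.sat Y (PForm.reduct X B) := by
  simp only [PForm.reduct]
  split_ifs with h
  · simp [PForm.sat]
  · simp only [PForm.sat, false_iff]
    rintro (hA | hB)
    · exact h (Or.inl (satReduct_imp_sat hA))
    · exact h (Or.inr (satReduct_imp_sat hB))

lemma R_imp {X Y : Set α} {A B : PForm α} :
    PForm.sat Y (PForm.reduct X (PForm.imp A B)) ↔
      PForm.sat X (PForm.imp A B) ∧
        (PForm.sat Y (PForm.reduct X A) → PForm.sat Y (PForm.reduct X B)) := by
  simp only [PForm.reduct]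
  split_ifs with h
  · exact ⟨fun hi => ⟨h, hi⟩, fun hp => hp.2⟩
  · exact ⟨fun hf => (hf : False).elim, fun hp => (h hp.1).elim⟩

lemma R_neg {X Y : Set α} {A : PForm α} :
    PForm.sat Y (PForm.reduct X (PForm.neg A)) ↔ ¬ PForm.sat X A := by
  rw [PForm.neg, R_imp]
  constructor
  · rintro ⟨h, _⟩; exact fun hA => (h hA : PForm.sat X PForm.bot)
  · intro h
    refine ⟨fun hA => absurd hA h, fun hA => absurd (satReduct_imp_sat hA) h⟩

lemma sat_listAnd {X : Set α} : ∀ {l : List (PForm α)},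
    PForm.sat X (listAnd l) ↔ ∀ G ∈ l, PForm.sat X G := by
  intro l
  induction l with
  | nil => simp [listAnd, PForm.top, PForm.sat]
  | cons G l ih => simp [listAnd, PForm.sat, ih]

lemma sat_listOr {X : Set α} : ∀ {l : List (PForm α)},
    PForm.sat X (listOr l) ↔ ∃ G ∈ l, PForm.sat X G := by
  intro l
  induction l with
  | nil => simp [listOr, PForm.sat]
  | cons G l ih => simp [listOr, PForm.sat, ih]

lemma R_listAnd {X Y : Set α} : ∀ {l : List (PForm α)},
    PForm.sat Y (PForm.reduct X (listAnd l)) ↔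
      ∀ G ∈ l, PForm.sat Y (PForm.reduct X G) := by
  intro l
  induction l with
  | nil =>
      simp only [listAnd, PForm.top, List.not_mem_nil, false_implies, implies_true, iff_true]
      rw [R_imp]
      simp [PForm.sat, PForm.reduct]
  | cons G l ih => simp [listAnd, R_and, ih]

lemma R_listOr {X Y : Set α} : ∀ {l : List (PForm α)},
    PForm.sat Y (PForm.reduct X (listOr l)) ↔
      ∃ G ∈ l, PForm.sat Y (PForm.reduct X G) := by
  intro l
  induction l with
  | nil => simp [listOr, PForm.reduct, PForm.sat]
  | cons G l ih => simp [listOr, R_or, ih]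

lemma sat_finsetAnd {X : Set α} {ι : Type} {s : Finset ι} {f : ι → PForm α} :
    PForm.sat X (finsetAnd s f) ↔ ∀ i ∈ s, PForm.sat X (f i) := by
  simp [finsetAnd, sat_listAnd]

lemma sat_finsetOr {X : Set α} {ι : Type} {s : Finset ι} {f : ι → PForm α} :
    PForm.sat X (finsetOr s f) ↔ ∃ i ∈ s, PForm.sat X (f i) := by
  simp [finsetOr, sat_listOr]

lemma R_finsetAnd {X Y : Set α} {ι : Type} {s : Finset ι} {f : ι → PForm α} :
    PForm.sat Y (PForm.reduct X (finsetAnd s f)) ↔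
      ∀ i ∈ s, PForm.sat Y (PForm.reduct X (f i)) := by
  simp [finsetAnd, R_listAnd]

lemma R_finsetOr {X Y : Set α} {ι : Type} {s : Finset ι} {f : ι → PForm α} :
    PForm.sat Y (PForm.reduct X (finsetOr s f)) ↔
      ∃ i ∈ s, PForm.sat Y (PForm.reduct X (f i)) := by
  simp [finsetOr, R_listOr]

end Aux

open Classical in
/-- for an antimonotone aggregate, the implications can be replaced by
negations of their antecedents, preserving strong equivalence. -/
theorem stmt15 {n : ℕ} (F : Fin n → PForm α) (w : Fin n → ℝ) (P : Multiset ℝ → Prop)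
    (hanti : ∀ W₁ W₂ : Multiset ℝ, W₂ ≤ W₁ →
      W₁ ≤ Multiset.map w Finset.univ.val → P W₁ → P W₂) :
    ∀ X Y : Set α,
      PForm.sat Y (PForm.reduct X (aggFormula F w P)) ↔
      PForm.sat Y (PForm.reduct X
        (finsetAnd
          (Finset.filter (fun I : Finset (Fin n) => ¬ P (Multiset.map w I.val)) Finset.univ)
          (fun I => PForm.neg (finsetAnd I F)))) := by
  intro X Y
  rw [aggFormula, R_finsetAnd, R_finsetAnd]
  -- The key combinatorial claim
  have key : (∀ I ∈ Finset.filter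
        (fun I : Finset (Fin n) => ¬ P (Multiset.map w I.val)) Finset.univ,
        PForm.sat X (finsetAnd I F) → PForm.sat X (finsetOr Iᶜ F)) →
      ∀ I ∈ Finset.filter
        (fun I : Finset (Fin n) => ¬ P (Multiset.map w I.val)) Finset.univ,
        ¬ PForm.sat X (finsetAnd I F) := by
    intro h
    have main : ∀ k : ℕ, ∀ I : Finset (Fin n), Iᶜ.card ≤ k →
        ¬ P (Multiset.map w I.val) → PForm.sat X (finsetAnd I F) → False := by
      intro k
      induction k with
      | zero =>
          intro I hcard hP hsat
          have hIc : Iᶜ = (∅ : Finset (Fin n)) := Finset.card_eq_zero.mp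
            (Nat.le_zero.mp hcard)
          have hmem : I ∈ Finset.filter
              (fun I : Finset (Fin n) => ¬ P (Multiset.map w I.val)) Finset.univ := by
            simp [Finset.mem_filter, hP]
          have := h I hmem hsat
          rw [hIc, sat_finsetOr] at this
          simpa using this
      | succ k ih =>
          intro I hcard hP hsat
          have hmem : I ∈ Finset.filter
              (fun I : Finset (Fin n) => ¬ P (Multiset.map w I.val)) Finset.univ := by
            simp [Finset.mem_filter, hP]
          have hdisj := h I hmem hsat
          rw [sat_finsetOr] at hdisj
          obtain ⟨j, hjc, hjsat⟩ := hdisj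
          set I' := insert j I with hI'
          have hjI : j ∉ I := Finset.mem_compl.mp hjc
          have hI'c : I'ᶜ = Iᶜ.erase j := by
            rw [hI', Finset.compl_insert]
          have hI'card : I'ᶜ.card ≤ k := by
            rw [hI'c, Finset.card_erase_of_mem hjc]
            omega
          have hP' : ¬ P (Multiset.map w I'.val) := by
            intro hp
            exact hP (hanti (Multiset.map w I'.val) (Multiset.map w I.val)
              (Multiset.map_le_map (Finset.val_le_iff.mpr (Finset.subset_insert j I)))
              (Multiset.map_le_map (Finset.val_le_iff.mpr (Finset.subset_univ I'))) hp)
          have hsat' : PForm.sat X (finsetAnd I' F) := by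
            rw [sat_finsetAnd] at hsat ⊢
            intro i hi
            rcases Finset.mem_insert.mp hi with hi | hi
            · exact hi ▸ hjsat
            · exact hsat i hi
          exact ih I' hI'card hP' hsat'
    intro I hmem
    have hP : ¬ P (Multiset.map w I.val) := (Finset.mem_filter.mp hmem).2
    exact fun hsat => main Iᶜ.card I le_rfl hP hsat
  constructor
  · intro hL I hmem
    rw [R_neg]
    have hX : ∀ I ∈ Finset.filter
        (fun I : Finset (Fin n) => ¬ P (Multiset.map w I.val)) Finset.univ,
        PForm.sat X (finsetAnd I F) → PForm.sat X (finsetOr Iᶜ F) := by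
      intro J hJ
      exact ((R_imp.mp (hL J hJ)).1 : _)
    exact key hX I hmem
  · intro hR I hmem
    rw [R_imp]
    have hnot : ¬ PForm.sat X (finsetAnd I F) := R_neg.mp (hR I hmem)
    exact ⟨fun hs => absurd hs hnot, fun hs => absurd (satReduct_imp_sat hs) hnot⟩
end

section
/- Let F and G be AND-OR combinations of ⊤, ⊥ and atoms (no implications other than ⊤ = ⊥ → ⊥). If F and G are classically equivalent, then F and G are strongly equivalent (i.e., F^X is classically equivalent to G^X for every set X of atoms). -/
variable {α : Type}

/-- AND-OR combinations of ⊤, ⊥ and atoms. -/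
inductive AndOr : PForm α → Prop where
  | bot : AndOr PForm.bot
  | top : AndOr PForm.top
  | atom (a : α) : AndOr (PForm.atom a)
  | and {F G : PForm α} : AndOr F → AndOr G → AndOr (PForm.and F G)
  | or {F G : PForm α} : AndOr F → AndOr G → AndOr (PForm.or F G)

lemma AndOr.mono {F : PForm α} (hF : AndOr F) {X X' : Set α} (hXX : X ⊆ X') :
    PForm.sat X F → PForm.sat X' F := by
  induction hF with
  | bot => exact id
  | top => simp [PForm.top, PForm.sat]
  | atom a => exact fun h => hXX h
  | and hF hG ihF ihG => exact fun ⟨h1, h2⟩ => ⟨ihF h1, ihG h2⟩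
  | or hF hG ihF ihG => exact fun h => h.elim (fun h1 => Or.inl (ihF h1)) (fun h2 => Or.inr (ihG h2))

lemma AndOr.reduct_sat {F : PForm α} (hF : AndOr F) (X Y : Set α) :
    PForm.sat Y (PForm.reduct X F) ↔ PForm.sat (X ∩ Y) F := by
  induction hF with
  | bot => simp [PForm.reduct, PForm.sat]
  | top => simp [PForm.top, PForm.reduct, PForm.sat]
  | atom a =>
      by_cases hx : a ∈ X <;> simp [PForm.reduct, PForm.sat, hx, Set.mem_inter_iff]
  | @and F G hF hG ihF ihG =>
      by_cases hx : PForm.sat X (PForm.and F G)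
      · rw [PForm.reduct, if_pos hx]; simp only [PForm.sat, ihF, ihG]
      · rw [PForm.reduct, if_neg hx]; simp only [PForm.sat, false_iff]
        exact fun hc => hx (AndOr.mono (AndOr.and hF hG) Set.inter_subset_left hc)
  | @or F G hF hG ihF ihG =>
      by_cases hx : PForm.sat X (PForm.or F G)
      · rw [PForm.reduct, if_pos hx]; simp only [PForm.sat, ihF, ihG]
      · rw [PForm.reduct, if_neg hx]; simp only [PForm.sat, false_iff]
        exact fun hc => hx (AndOr.mono (AndOr.or hF hG) Set.inter_subset_left hc)

/-- classically equivalent AND-OR combinations are strongly equivalent. -/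
theorem stmt16 (F G : PForm α) (hF : AndOr F) (hG : AndOr G)
    (h : ∀ X : Set α, PForm.sat X F ↔ PForm.sat X G) :
    ∀ X Y : Set α,
      PForm.sat Y (PForm.reduct X F) ↔ PForm.sat Y (PForm.reduct X G) := by
  intro X Y
  rw [AndOr.reduct_sat hF, AndOr.reduct_sat hG, h]
end

section
/- Let F be a nested expression without negations (an AND-OR combination of atoms, ⊤, ⊥) and X, Y sets of atoms with Y ⊆ X. Then Y classically satisfies the reduct F^X if and only if Y classically satisfies F. -/
variable {α : Type}

lemma andor_mono {F : PForm α} (hF : AndOr F) {X Y : Set α} (hYX : Y ⊆ X)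
    (h : PForm.sat Y F) : PForm.sat X F := by
  induction hF with
  | bot => exact h
  | top => exact fun x => x
  | atom a => exact hYX h
  | and _ _ ih1 ih2 => exact ⟨ih1 h.1, ih2 h.2⟩
  | or _ _ ih1 ih2 => exact h.imp ih1 ih2

/-- for a negation-free nested expression F and Y ⊆ X, Y ⊨ F^X iff Y ⊨ F. -/
theorem stmt17 (F : PForm α) (hF : AndOr F) (X Y : Set α) (hYX : Y ⊆ X) :
    PForm.sat Y (PForm.reduct X F) ↔ PForm.sat Y F := by
  induction hF with
  | bot => simp [PForm.reduct]
  | top =>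
    show PForm.sat Y (PForm.reduct X (PForm.imp PForm.bot PForm.bot)) ↔ _
    have : PForm.sat X (PForm.imp PForm.bot PForm.bot) := fun h => h
    simp [PForm.reduct, PForm.sat, this, PForm.top]
  | atom a =>
    simp only [PForm.reduct]
    split
    · rfl
    · constructor
      · exact fun h => h.elim
      · intro h; exact absurd (hYX h) ‹_›
  | and h1 h2 ih1 ih2 =>
    simp only [PForm.reduct]
    split
    · simp only [PForm.sat]; rw [ih1, ih2]
    · constructor
      · exact fun h => h.elim
      · intro h; exact absurd (andor_mono (AndOr.and h1 h2) hYX h) ‹_›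
  | or h1 h2 ih1 ih2 =>
    simp only [PForm.reduct]
    split
    · simp only [PForm.sat]; rw [ih1, ih2]
    · constructor
      · exact fun h => h.elim
      · intro h; exact absurd (andor_mono (AndOr.or h1 h2) hYX h) ‹_›
end

section
/- If X is a stable model of a propositional theory Γ, then the only subset of X satisfying the reduct Γ^X is X itself and all atoms occurring in Γ^X belong to X, so that Γ^X is classically equivalent to ⋀X (i.e., a set Y satisfies Γ^X iff X ⊆ Y). -/
variable {α : Type}

lemma sat_reduct_inter (X Z : Set α) (F : PForm α) :
    PForm.sat Z (PForm.reduct X F) ↔ PForm.sat (Z ∩ X) (PForm.reduct X F) := by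
  induction F with
  | bot => simp [PForm.reduct, PForm.sat]
  | atom a =>
      by_cases ha : a ∈ X <;> simp [PForm.reduct, PForm.sat, ha]
  | and F G ihF ihG =>
      simp only [PForm.reduct]; split_ifs <;> simp [PForm.sat, ihF, ihG]
  | or F G ihF ihG =>
      simp only [PForm.reduct]; split_ifs <;> simp [PForm.sat, ihF, ihG]
  | imp F G ihF ihG =>
      simp only [PForm.reduct]; split_ifs <;> simp [PForm.sat, ihF, ihG]

/-- if X is a stable model of Γ then Γ^X is classically equivalent to the
theory consisting of the atoms of X. -/
theorem stmt18 (Γ : Set (PForm α)) (X : Set α) (h : StableModel Γ X) :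
    ∀ Y : Set α, satTh Y (reductTh X Γ) ↔ X ⊆ Y := by
  intro Y
  constructor
  · intro hY
    have hYX : satTh (Y ∩ X) (reductTh X Γ) := by
      intro F hF
      obtain ⟨G, hG, rfl⟩ := hF
      exact (sat_reduct_inter X Y G).mp (hY _ ⟨G, hG, rfl⟩)
    by_contra hns
    have hne : Y ∩ X ≠ X := by
      intro he
      exact hns (he ▸ Set.inter_subset_left)
    exact h.2 (Y ∩ X) ⟨Set.inter_subset_right, fun hsub => hne
      (le_antisymm Set.inter_subset_right hsub)⟩ hYX
  · intro hXY F hF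
    obtain ⟨G, hG, rfl⟩ := hF
    have hx : PForm.sat X (PForm.reduct X G) := h.1 _ ⟨G, hG, rfl⟩
    have : Y ∩ X = X := Set.inter_eq_right.mpr hXY
    rw [sat_reduct_inter, this]
    exact hx
end
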